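/- Let G = (V,E) be a finite simple graph containing no cycle of length 5 (as a subgraph, not necessarily induced), and let v ∈ V with D(v) = ∅. Then every maximal independent set of the subgraph of G induced by N_2(v) dominates N(v). -/

import Mathlib

namespace WC

variable {V : Type*}

/-- A set of vertices is independent if its elements are pairwise nonadjacent. -/
def IsIndep (G : SimpleGraph V) (S : Set V) : Prop :=
  S.Pairwise fun a b => ¬ G.Adj a b

/-- A maximal independent set: independent and not properly contained in another
independent set. -/
def IsMaxIndep (G : SimpleGraph V) (S : Set V) : Prop :=
  IsIndep G S ∧ ∀ T : Set V, IsIndep G T → S ⊆ T → T = S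

/-- A maximal independent set of the subgraph of `G` induced by `A`
(equivalently, a subset of `A`, independent in `G`, maximal among such). -/
def IsMaxIndepOn (G : SimpleGraph V) (A S : Set V) : Prop :=
  S ⊆ A ∧ IsIndep G S ∧ ∀ T : Set V, T ⊆ A → IsIndep G T → S ⊆ T → T = S

/-- The weight of a set of vertices: `w(S) = Σ_{s ∈ S} w(s)`. -/
noncomputable def wsum (w : V → ℝ) (S : Set V) : ℝ := ∑ᶠ x ∈ S, w x

/-- `G` is `w`-well-covered if all maximal independent sets have the same weight. -/
def WWC (G : SimpleGraph V) (w : V → ℝ) : Prop :=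
  ∀ S T : Set V, IsMaxIndep G S → IsMaxIndep G T → wsum w S = wsum w T

/-- `G` is well-covered if all maximal independent sets have the same cardinality. -/
def WellCovered (G : SimpleGraph V) : Prop :=
  ∀ S T : Set V, IsMaxIndep G S → IsMaxIndep G T → S.ncard = T.ncard

/-- `N(S)`, the set of vertices at distance exactly 1 from `S`. -/
def nbhd (G : SimpleGraph V) (S : Set V) : Set V :=
  {x | x ∉ S ∧ ∃ s ∈ S, G.Adj x s}

/-- `N[S]`, the set of vertices at distance at most 1 from `S`. -/
def cnbhd (G : SimpleGraph V) (S : Set V) : Set V :=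
  S ∪ {x | ∃ s ∈ S, G.Adj x s}

/-- `N₂(S)`, the set of vertices at distance exactly 2 from `S`. -/
def n2 (G : SimpleGraph V) (S : Set V) : Set V :=
  {x | x ∉ cnbhd G S ∧ ∃ y ∈ nbhd G S, G.Adj x y}

/-- `S` dominates `T` if `T ⊆ N[S]`. -/
def Dominates (G : SimpleGraph V) (S T : Set V) : Prop := T ⊆ cnbhd G S

/-- `D(v) = N(v) \ N(N₂(v))`. -/
def dSet (G : SimpleGraph V) (v : V) : Set V :=
  G.neighborSet v \ nbhd G (n2 G {v})

/-- `L(G)`: vertices of degree 1, or of degree 2 lying on a triangle. -/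
def lSet (G : SimpleGraph V) : Set V :=
  {v | (G.neighborSet v).ncard = 1 ∨
    ((G.neighborSet v).ncard = 2 ∧ ∃ a b, G.Adj v a ∧ G.Adj v b ∧ G.Adj a b)}

/-- `G` contains a cycle of length `k` as a (not necessarily induced) subgraph. -/
def HasCycleLen (G : SimpleGraph V) (k : ℕ) : Prop :=
  ∃ (u : V) (p : G.Walk u u), p.IsCycle ∧ p.length = k

/-- A vertex is simplicial if its closed neighborhood induces a complete subgraph. -/
def Simplicial (G : SimpleGraph V) (v : V) : Prop :=
  ∀ a ∈ G.neighborSet v, ∀ b ∈ G.neighborSet v, a ≠ b → G.Adj a b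

/-- `B` is an induced complete bipartite subgraph of `G` on (nonempty, disjoint)
parts `BX` and `BY`. -/
def IsCompleteBipartiteOn (G : SimpleGraph V) (BX BY : Set V) : Prop :=
  BX.Nonempty ∧ BY.Nonempty ∧ Disjoint BX BY ∧ IsIndep G BX ∧ IsIndep G BY ∧
    ∀ x ∈ BX, ∀ y ∈ BY, G.Adj x y

/-- `B` (on parts `BX`, `BY`) is a generating subgraph of `G`: there is an
independent set `S` (a witness) such that `S ∪ BX` and `S ∪ BY` are both
maximal independent sets of `G`. -/
def IsGenerating (G : SimpleGraph V) (BX BY : Set V) : Prop :=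
  ∃ S : Set V, IsIndep G S ∧ IsMaxIndep G (S ∪ BX) ∧ IsMaxIndep G (S ∪ BY)

/-- The edge `xy` is relating: there is an independent set `S` such that
`S ∪ {x}` and `S ∪ {y}` are both maximal independent sets of `G`. -/
def IsRelating (G : SimpleGraph V) (x y : V) : Prop :=
  G.Adj x y ∧ ∃ S : Set V, IsIndep G S ∧ IsMaxIndep G (S ∪ {x}) ∧ IsMaxIndep G (S ∪ {y})

end WC

open WC

/-! If `u ∈ N(v)` were not dominated by `T`, then `D(v) = ∅` gives a neighbour `s ∈ N₂(v)` of `u`,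
maximality of `T` gives a neighbour `t ∈ T` of `s`, and `t ∈ N₂(v)` has a neighbour `w ∈ N(v)`;
then `v u s t w` is a `C₅`. -/

namespace WC

variable {V : Type*} {G : SimpleGraph V}

theorem hasCycleLen_five {a b c d e : V} (hab : G.Adj a b) (hbc : G.Adj b c)
    (hcd : G.Adj c d) (hde : G.Adj d e) (hea : G.Adj e a)
    (hac : a ≠ c) (had : a ≠ d) (hbd : b ≠ d) (hbe : b ≠ e) (hce : c ≠ e) :
    HasCycleLen G 5 := by
  refine ⟨a, .cons hab (.cons hbc (.cons hcd (.cons hde (.cons hea .nil)))), ?_, rfl⟩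
  rw [SimpleGraph.Walk.cons_isCycle_iff, SimpleGraph.Walk.isPath_def]
  have := hab.ne; have := hbc.ne; have := hcd.ne; have := hde.ne; have := hea.ne
  simp_all [eq_comm]

theorem mem_n2_singleton_iff {v x : V} :
    x ∈ n2 G {v} ↔ x ≠ v ∧ ¬ G.Adj x v ∧ ∃ y, G.Adj v y ∧ G.Adj y x := by
  simp only [n2, cnbhd, nbhd, Set.mem_ofPred_eq, Set.mem_union, Set.mem_singleton_iff,
    exists_eq_left, not_or]
  constructor
  · rintro ⟨hx, y, ⟨-, hyv⟩, hxy⟩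
    exact ⟨hx.1, hx.2, y, hyv.symm, hxy.symm⟩
  · rintro ⟨hxv, hxv', y, hvy, hyx⟩
    exact ⟨⟨hxv, hxv'⟩, y, ⟨hvy.ne', hvy.symm⟩, hyx.symm⟩

theorem exists_adj_n2_of_dSet_eq_empty {v u : V} (hD : dSet G v = ∅) (hvu : G.Adj v u) :
    ∃ s ∈ n2 G {v}, G.Adj u s := by
  by_contra h
  have hu : u ∈ dSet G v := ⟨hvu, fun ⟨_, s, hs, hus⟩ => h ⟨s, hs, hus⟩⟩
  simp [hD] at hu

theorem IsMaxIndepOn.exists_adj {A T : Set V} {s : V} (hT : IsMaxIndepOn G A T)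
    (hsA : s ∈ A) (hsT : s ∉ T) : ∃ t ∈ T, G.Adj s t := by
  obtain ⟨hTA, hTind, hTmax⟩ := hT
  by_contra! h
  have hind : IsIndep G (insert s T) :=
    hTind.insert fun t ht _ => ⟨h t ht, fun hts => h t ht hts.symm⟩
  exact hsT (hTmax _ (Set.insert_subset hsA hTA) hind (Set.subset_insert s T) ▸
    Set.mem_insert s T)

end WC

theorem stmt_5_general {V : Type*} (G : SimpleGraph V)
    (h5 : ¬ HasCycleLen G 5) (v : V) (hD : dSet G v = ∅) (T : Set V)
    (hT : IsMaxIndepOn G (n2 G {v}) T) :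
    Dominates G T (G.neighborSet v) := by
  intro u (hvu : G.Adj v u)
  by_contra hu
  have hut : ∀ t ∈ T, ¬ G.Adj u t := fun t ht hadj => hu (Or.inr ⟨t, ht, hadj⟩)
  obtain ⟨s, hs, hus⟩ := exists_adj_n2_of_dSet_eq_empty hD hvu
  obtain ⟨t, htT, hst⟩ := hT.exists_adj hs fun hsT => hut s hsT hus
  obtain ⟨hsv, hsv', -⟩ := mem_n2_singleton_iff.mp hs
  obtain ⟨htv, htv', w, hvw, hwt⟩ := mem_n2_singleton_iff.mp (hT.1 htT)
  refine h5 (hasCycleLen_five hvu hus hst hwt.symm hvw.symm hsv.symm htv.symm ?_ ?_ ?_)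
  · rintro rfl; exact htv' hvu.symm
  · rintro rfl; exact hut t htT hwt
  · rintro rfl; exact hsv' hvw.symm

/-- in a graph with no `C₅`, if `D(v) = ∅` then every maximal
independent set of the subgraph induced by `N₂(v)` dominates `N(v)`. -/
theorem stmt_5 {V : Type*} [Fintype V] (G : SimpleGraph V)
    (h5 : ¬ HasCycleLen G 5) (v : V) (hD : dSet G v = ∅) (T : Set V)
    (hT : IsMaxIndepOn G (n2 G {v}) T) :
    Dominates G T (G.neighborSet v) :=
  stmt_5_general G h5 v hD T hT
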